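/- arXiv:1507.08733 — 6 statements merged into one kernel-verified Lean document; each statement's English description precedes it below -/
import Mathlib

section
/- Let K ≥ 3, 0 ≤ k ≤ K−2, and let X be finite with distribution P_X. Suppose every source symbol x is assigned to a node class j(x) ∈ {0,…,K−2} and code length l_k(x), satisfying ∑_x (K−j(x))·(K−k)^{-1}·K^{-l_k(x)} = 1. Then the average code length L_k = ∑_x P_X(x)·l_k(x) satisfies L_k ≥ H_K(X) + ∑_{j=0}^{K-2} P(N_j^{(k)})·log_K((K−j)/(K−k)), where P(N_j^{(k)}) = ∑_{x: j(x)=j} P_X(x) and H_K(X) is the base-K entropy. -/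
/-!
The Kraft weights `q x = (K - j x) / (K - k) · K ^ (-l x)` are positive and sum to `1`, so Gibbs'
inequality `∑ P log_K q ≤ ∑ P log_K P` holds. Since `log_K q x = log_K ((K - j x) / (K - k)) - l x`,
this reads `L_k ≥ H_K(X) + ∑ₓ P x · log_K ((K - j x) / (K - k))`, and grouping the last sum by the
node class `j x` gives the stated bound.
-/

open Finset Real

namespace Real

lemma mul_log_le_mul_log_add_sub {p q : ℝ} (hp : 0 ≤ p) (hq : 0 < q) :
    p * log q ≤ p * log p + (q - p) := by
  rcases hp.eq_or_lt with rfl | hp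
  · simpa using hq.le
  have h := mul_le_mul_of_nonneg_left (log_le_sub_one_of_pos (div_pos hq hp)) hp.le
  rw [log_div hq.ne' hp.ne', mul_sub, mul_sub, mul_div_cancel₀ _ hp.ne', mul_one] at h
  linarith

variable {ι : Type*} {s : Finset ι} {P q : ι → ℝ}

theorem sum_mul_log_le_sum_mul_log (hP : ∀ i ∈ s, 0 ≤ P i) (hq : ∀ i ∈ s, 0 < q i)
    (hsum : ∑ i ∈ s, q i ≤ ∑ i ∈ s, P i) :
    ∑ i ∈ s, P i * log (q i) ≤ ∑ i ∈ s, P i * log (P i) := by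
  have h := sum_le_sum fun i hi => mul_log_le_mul_log_add_sub (hP i hi) (hq i hi)
  rw [sum_add_distrib, sum_sub_distrib] at h
  linarith

theorem sum_mul_logb_le_sum_mul_logb {b : ℝ} (hb : 1 < b) (hP : ∀ i ∈ s, 0 ≤ P i)
    (hq : ∀ i ∈ s, 0 < q i) (hsum : ∑ i ∈ s, q i ≤ ∑ i ∈ s, P i) :
    ∑ i ∈ s, P i * logb b (q i) ≤ ∑ i ∈ s, P i * logb b (P i) := by
  simp only [logb, ← mul_div_assoc, ← sum_div]
  exact div_le_div_of_nonneg_right (sum_mul_log_le_sum_mul_log hP hq hsum) (log_pos hb).le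

lemma logb_mul_inv_self_pow {b a : ℝ} (hb : 1 < b) (ha : 0 < a) (n : ℕ) :
    logb b (a * (b ^ n)⁻¹) = logb b a - n := by
  rw [logb_mul ha.ne' (by positivity), logb_inv, logb_pow, logb_self_eq_one hb, mul_one,
    sub_eq_add_neg]

end Real

lemma Finset.sum_fiberwise_mul_of_maps_to {ι κ R : Type*} [CommSemiring R] [DecidableEq κ]
    {s : Finset ι} {t : Finset κ} {g : ι → κ} (h : ∀ i ∈ s, g i ∈ t) (P : ι → R) (f : κ → R) :
    ∑ c ∈ t, (∑ i ∈ s with g i = c, P i) * f c = ∑ i ∈ s, P i * f (g i) := by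
  rw [← sum_fiberwise_of_maps_to h]
  refine sum_congr rfl fun c _ => ?_
  rw [sum_mul]
  exact sum_congr rfl fun i hi => by rw [(mem_filter.1 hi).2]

open Finset in
/-- Lower bound for the average code length of a K-ary AIFV code tree T_k. -/
theorem stmt_3 {X : Type*} [Fintype X] (K k : ℕ) (hK : 3 ≤ K) (hk : k ≤ K - 2)
    (P : X → ℝ) (hP : ∀ x, 0 ≤ P x) (hPsum : ∑ x, P x = 1)
    (j : X → ℕ) (hj : ∀ x, j x ≤ K - 2) (l : X → ℕ)
    (hKraft : ∑ x, ((K : ℝ) - j x) * ((K : ℝ) - k)⁻¹ * ((K : ℝ) ^ (l x))⁻¹ = 1) :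
    ∑ x, P x * (l x : ℝ) ≥
      (-∑ x, P x * Real.logb K (P x)) +
        ∑ j' ∈ Finset.range (K - 1),
          (∑ x ∈ Finset.univ.filter (fun x => j x = j'), P x) *
            Real.logb K (((K : ℝ) - j') / ((K : ℝ) - k)) := by
  have hK1 : (1 : ℝ) < K := by exact_mod_cast (by omega : 1 < K)
  have hkK : (k : ℝ) < K := by exact_mod_cast (by omega : k < K)
  have hjK (x : X) : (j x : ℝ) < K := by exact_mod_cast (by have := hj x; omega : j x < K)
  set a : X → ℝ := fun x => ((K : ℝ) - j x) / ((K : ℝ) - k)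
  have ha (x : X) : 0 < a x := div_pos (sub_pos.2 (hjK x)) (sub_pos.2 hkK)
  set q : X → ℝ := fun x => a x * ((K : ℝ) ^ l x)⁻¹
  have hq (x : X) : 0 < q x := mul_pos (ha x) (by positivity)
  have hqsum : ∑ x, q x = ∑ x, P x := by
    simpa only [q, a, div_eq_mul_inv, hPsum] using hKraft
  have gibbs := sum_mul_logb_le_sum_mul_logb hK1 (fun x _ => hP x) (fun x _ => hq x) hqsum.le
  have hfiber := sum_fiberwise_mul_of_maps_to (s := univ) (t := range (K - 1)) (g := j)
    (fun x _ => mem_range.2 (by have := hj x; omega)) P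
    (fun c : ℕ => logb K (((K : ℝ) - c) / ((K : ℝ) - k)))
  simp only [q, logb_mul_inv_self_pow hK1 (ha _), mul_sub, sum_sub_distrib] at gibbs
  rw [ge_iff_le, hfiber]
  linarith
end

section
/- Let K ≥ 3, 0 ≤ k ≤ K−2, and P_X a distribution on a finite set X. For each x let j(x) ∈ {0,…,K−2} and define l_k(x) = ⌈−log_K P_X(x) + log_K((K−j(x))/(K−k))⌉. Then ∑_x (K−j(x))·(K−k)^{-1}·K^{-l_k(x)} ≤ 1, and ∑_x P_X(x)·l_k(x) < H_K(X) + ∑_{j} P(N_j^{(k)})·log_K((K−j)/(K−k)) + 1. -/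
/-!
Choosing `l x = ⌈logb K (q x / P x)⌉` with `q x = (K - j x) / (K - k)` gives `q x * K ^ (-l x) ≤ P x`,
which sums to the Kraft-type inequality, while `l x < logb K (q x / P x) + 1` averaged against
`P` gives the length bound; grouping the `logb K (q x)` terms by the value of `j x` produces the
sum over the classes `N_j^{(k)}`.
-/

open Finset Real

theorem mul_zpow_neg_ceil_logb_le {b p q : ℝ} (hb : 1 < b) (hp : 0 < p) (hq : 0 < q) :
    q * b ^ (-⌈-logb b p + logb b q⌉) ≤ p := by
  have hlog : -logb b p + logb b q = logb b (q / p) := by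
    rw [logb_div hq.ne' hp.ne']; ring
  have hceil : q / p ≤ b ^ ⌈-logb b p + logb b q⌉ := by
    rw [hlog, ← rpow_intCast]
    exact (logb_le_iff_le_rpow hb (div_pos hq hp)).1 (Int.le_ceil _)
  rw [div_le_iff₀ hp] at hceil
  rw [zpow_neg, ← div_eq_mul_inv, div_le_iff₀ (by positivity)]
  linarith

theorem sum_mul_ceil_lt {X : Type*} [Fintype X] [Nonempty X] (p a : X → ℝ)
    (hp : ∀ x, 0 < p x) : ∑ x, p x * ⌈a x⌉ < ∑ x, p x * a x + ∑ x, p x := by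
  rw [← sum_add_distrib]
  exact sum_lt_sum_of_nonempty univ_nonempty fun x _ =>
    by rw [← mul_add_one]; exact mul_lt_mul_of_pos_left (Int.ceil_lt_add_one _) (hp x)

theorem sum_fiberwise_sum_mul {ι κ : Type*} [DecidableEq κ] {s : Finset ι} {t : Finset κ}
    {g : ι → κ} (h : ∀ i ∈ s, g i ∈ t) (w : ι → ℝ) (f : κ → ℝ) :
    ∑ y ∈ t, (∑ i ∈ s with g i = y, w i) * f y = ∑ i ∈ s, w i * f (g i) := by
  simp_rw [sum_mul]
  rw [← sum_fiberwise_of_maps_to h]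
  refine sum_congr rfl fun y _ => sum_congr rfl fun i hi => ?_
  rw [(mem_filter.1 hi).2]

open Finset in
/-- Ceiling lengths satisfy the relaxed Kraft-like inequality and yield the
upper bound on average code length for K-ary AIFV code trees. -/
theorem stmt_4 {X : Type*} [Fintype X] (K k : ℕ) (hK : 3 ≤ K) (hk : k ≤ K - 2)
    (P : X → ℝ) (hP : ∀ x, 0 < P x) (hPsum : ∑ x, P x = 1)
    (j : X → ℕ) (hj : ∀ x, j x ≤ K - 2) (l : X → ℤ)
    (hl : ∀ x, l x =
      ⌈-Real.logb K (P x) + Real.logb K (((K : ℝ) - j x) / ((K : ℝ) - k))⌉) :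
    (∑ x, ((K : ℝ) - j x) * ((K : ℝ) - k)⁻¹ * (K : ℝ) ^ (-(l x)) ≤ 1) ∧
    ∑ x, P x * (l x : ℝ) <
      (-∑ x, P x * Real.logb K (P x)) +
        (∑ j' ∈ Finset.range (K - 1),
          (∑ x ∈ Finset.univ.filter (fun x => j x = j'), P x) *
            Real.logb K (((K : ℝ) - j') / ((K : ℝ) - k))) + 1 := by
  have hK1 : (1 : ℝ) < K := by exact_mod_cast (by omega : 1 < K)
  have hq : ∀ x, 0 < ((K : ℝ) - j x) / ((K : ℝ) - k) := fun x => by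
    have hjK : (j x : ℝ) < K := by exact_mod_cast (by have := hj x; omega : j x < K)
    have hkK : (k : ℝ) < K := by exact_mod_cast (by omega : k < K)
    exact div_pos (by linarith) (by linarith)
  have : Nonempty X := by
    by_contra h
    simp [not_nonempty_iff.1 h] at hPsum
  constructor
  · calc ∑ x, ((K : ℝ) - j x) * ((K : ℝ) - k)⁻¹ * (K : ℝ) ^ (-(l x))
        ≤ ∑ x, P x := sum_le_sum fun x _ => by
          rw [← div_eq_mul_inv, hl x]; exact mul_zpow_neg_ceil_logb_le hK1 (hP x) (hq x)
      _ = 1 := hPsum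
  · rw [sum_fiberwise_sum_mul (fun x _ => mem_range.2 (by have := hj x; omega))]
    calc ∑ x, P x * (l x : ℝ)
        < ∑ x, P x * (-logb K (P x) + logb K (((K : ℝ) - j x) / ((K : ℝ) - k))) + ∑ x, P x := by
          simp_rw [hl]; exact sum_mul_ceil_lt P _ hP
      _ = _ := by simp only [mul_add, mul_neg, sum_add_distrib, sum_neg_distrib, hPsum]
end

section
/- For the binary AIFV code with leaf set N0 and master-node set N1 in tree T0, where each master node at depth l contributes weight (3/4)·2^{-l} and each leaf at depth l contributes 2^{-l}, the Kraft-type equality ∑_{x∈N0} 2^{-l(x)} + (3/4)·∑_{x∈N1} 2^{-l(x)} = 1 implies the lower bound L0 = ∑_x P(x)·l(x) ≥ H_2(X) − P(N1)·(2 − log_2 3), where P(N1) = ∑_{x∈N1} P(x). -/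
/-!
The weights `q x = 2^{-l x}` on leaves and `(3/4)·2^{-l x}` on master nodes form a probability
distribution exactly when the Kraft-type equality holds. Gibbs' inequality
`∑ P log₂ q ≤ ∑ P log₂ P` then gives the bound, since
`log₂ q x = -l x - (2 - log₂ 3)·[x ∈ N1]`.
-/

open Finset Real

lemma mul_log_le_mul_log_add_sub {p q : ℝ} (hp : 0 ≤ p) (hq : 0 < q) :
    p * log q ≤ p * log p + q - p := by
  rcases hp.eq_or_lt with rfl | hp
  · simpa using hq.le
  have hlog : log q - log p ≤ q / p - 1 := by
    rw [← log_div hq.ne' hp.ne']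
    exact log_le_sub_one_of_pos (div_pos hq hp)
  calc p * log q = p * log p + p * (log q - log p) := by ring
    _ ≤ p * log p + p * (q / p - 1) := by gcongr
    _ = p * log p + q - p := by field_simp; ring

/-- Gibbs' inequality. -/
theorem sum_mul_log_le_sum_mul_log {ι : Type*} (s : Finset ι) {p q : ι → ℝ}
    (hp : ∀ i ∈ s, 0 ≤ p i) (hq : ∀ i ∈ s, 0 < q i) (hmass : ∑ i ∈ s, q i ≤ ∑ i ∈ s, p i) :
    ∑ i ∈ s, p i * log (q i) ≤ ∑ i ∈ s, p i * log (p i) := by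
  have hpt : ∑ i ∈ s, p i * log (q i) ≤ ∑ i ∈ s, (p i * log (p i) + q i - p i) :=
    sum_le_sum fun i hi => mul_log_le_mul_log_add_sub (hp i hi) (hq i hi)
  rw [sum_sub_distrib, sum_add_distrib] at hpt
  linarith

theorem sum_mul_logb_le_sum_mul_logb {ι : Type*} (s : Finset ι) {b : ℝ} (hb : 1 < b)
    {p q : ι → ℝ} (hp : ∀ i ∈ s, 0 ≤ p i) (hq : ∀ i ∈ s, 0 < q i)
    (hmass : ∑ i ∈ s, q i ≤ ∑ i ∈ s, p i) :
    ∑ i ∈ s, p i * logb b (q i) ≤ ∑ i ∈ s, p i * logb b (p i) := by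
  simp only [logb, ← mul_div_assoc, ← sum_div]
  exact div_le_div_of_nonneg_right (sum_mul_log_le_sum_mul_log s hp hq hmass) (log_pos hb).le

section AIFV

variable {X : Type*} [DecidableEq X] (N1 : Finset X) (l : X → ℕ)

/-- A master node at depth `l x` carries `(3/4)·2^{-l x}`: completing it takes three of its four
grandchildren, each of weight `2^{-(l x + 2)}`. -/
noncomputable def aifvWeight (x : X) : ℝ :=
  (if x ∈ N1 then 3 / 4 else 1) * ((2 : ℝ) ^ l x)⁻¹

lemma aifvWeight_pos (x : X) : 0 < aifvWeight N1 l x := by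
  unfold aifvWeight; split_ifs <;> positivity

lemma logb_aifvWeight (x : X) :
    logb 2 (aifvWeight N1 l x) = -(l x : ℝ) - if x ∈ N1 then 2 - logb 2 3 else 0 := by
  have h2 : logb 2 (((2 : ℝ) ^ l x)⁻¹) = -(l x : ℝ) := by
    rw [logb_inv, logb_pow, logb_self_eq_one one_lt_two, mul_one]
  have h34 : logb 2 (3 / 4 : ℝ) = logb 2 3 - 2 := by
    rw [logb_div three_ne_zero four_ne_zero, show (4 : ℝ) = 2 ^ 2 by norm_num, logb_pow,
      logb_self_eq_one one_lt_two]
    ring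
  unfold aifvWeight
  split_ifs
  · rw [logb_mul (by norm_num) (by positivity), h2, h34]; ring
  · rw [one_mul, h2, sub_zero]

variable [Fintype X]

lemma sum_aifvWeight {N0 : Finset X} (hdisj : Disjoint N0 N1) (hcover : N0 ∪ N1 = univ) :
    ∑ x, aifvWeight N1 l x
      = ∑ x ∈ N0, ((2 : ℝ) ^ l x)⁻¹ + (3 / 4) * ∑ x ∈ N1, ((2 : ℝ) ^ l x)⁻¹ := by
  rw [← hcover, sum_union hdisj, mul_sum]
  congr 1 <;> refine sum_congr rfl fun x hx => ?_
  · simp [aifvWeight, disjoint_left.mp hdisj hx]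
  · simp [aifvWeight, hx]

lemma sum_mul_logb_aifvWeight (P : X → ℝ) :
    ∑ x, P x * logb 2 (aifvWeight N1 l x)
      = -∑ x, P x * (l x : ℝ) - (∑ x ∈ N1, P x) * (2 - logb 2 3) := by
  simp only [logb_aifvWeight, mul_sub, mul_neg, mul_ite, mul_zero, sum_sub_distrib, sum_neg_distrib,
    sum_ite_mem, univ_inter, sum_mul]

end AIFV

open Finset in
/-- Kraft-type lower bound for the binary AIFV tree T0 with leaf set N0 and
master-node set N1. -/
theorem stmt_8 {X : Type*} [Fintype X] [DecidableEq X]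
    (N0 N1 : Finset X) (hdisj : Disjoint N0 N1) (hcover : N0 ∪ N1 = Finset.univ)
    (P : X → ℝ) (hP : ∀ x, 0 ≤ P x) (hPsum : ∑ x, P x = 1)
    (l : X → ℕ)
    (hKraft : ∑ x ∈ N0, ((2 : ℝ) ^ (l x))⁻¹
        + (3/4) * ∑ x ∈ N1, ((2 : ℝ) ^ (l x))⁻¹ = 1) :
    ∑ x, P x * (l x : ℝ) ≥
      (-∑ x, P x * Real.logb 2 (P x)) - (∑ x ∈ N1, P x) * (2 - Real.logb 2 3) := by
  have hmass : ∑ x, aifvWeight N1 l x ≤ ∑ x, P x := by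
    rw [sum_aifvWeight N1 l hdisj hcover, hKraft, hPsum]
  have hgibbs := sum_mul_logb_le_sum_mul_logb univ one_lt_two (fun x _ => hP x)
    (fun x _ => aifvWeight_pos N1 l x) hmass
  rw [sum_mul_logb_aifvWeight] at hgibbs
  linarith
end

section
/- Suppose pairs with attributes (L0, q0) and (L1, q1) range over finite sets S0 and S1, and at stage m, (L0^(m), q0^(m)) minimizes L0 + C^(m-1)·q0 over S0 and (L1^(m), q1^(m)) minimizes L1 − C^(m-1)·q1 over S1, with updated cost C^(m) = (L1^(m) − L0^(m))/(q0^(m) + q1^(m)) and L^(m) = (q1^(m)·L0^(m) + q0^(m)·L1^(m))/(q0^(m)+q1^(m)). Assume all q's are positive. If C^(m) < C^(m-1) then L^(m) < L^(m-1), and if C^(m) > C^(m-1) then L^(m) < L^(m-1). -/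
/-- Monotone decrease step of the iterative cost-update algorithm:
if the cost changes, the global average code length strictly decreases. -/
theorem stmt_10 (S0 S1 : Finset (ℝ × ℝ))
    (L0m q0m L1m q1m L0p q0p L1p q1p Cprev : ℝ)
    (hq0m : 0 < q0m) (hq1m : 0 < q1m) (hq0p : 0 < q0p) (hq1p : 0 < q1p)
    (hq0S : ∀ p ∈ S0, 0 < p.2) (hq1S : ∀ p ∈ S1, 0 < p.2)
    (hmem0 : (L0m, q0m) ∈ S0) (hmem1 : (L1m, q1m) ∈ S1)
    (hmem0p : (L0p, q0p) ∈ S0) (hmem1p : (L1p, q1p) ∈ S1)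
    (hmin0 : ∀ p ∈ S0, L0m + Cprev * q0m ≤ p.1 + Cprev * p.2)
    (hmin1 : ∀ p ∈ S1, L1m - Cprev * q1m ≤ p.1 - Cprev * p.2)
    (hCprev : Cprev = (L1p - L0p) / (q0p + q1p)) :
    (((L1m - L0m) / (q0m + q1m) < Cprev →
        (q1m * L0m + q0m * L1m) / (q0m + q1m) <
          (q1p * L0p + q0p * L1p) / (q0p + q1p)) ∧
     (Cprev < (L1m - L0m) / (q0m + q1m) →
        (q1m * L0m + q0m * L1m) / (q0m + q1m) <
          (q1p * L0p + q0p * L1p) / (q0p + q1p))) := by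
  have hs : (0:ℝ) < q0m + q1m := by linarith
  have hsp : (0:ℝ) < q0p + q1p := by linarith
  have h0 := hmin0 _ hmem0p
  have h1 := hmin1 _ hmem1p
  simp only [hCprev] at h0 h1 ⊢
  field_simp at h0 h1
  constructor <;> intro hC
  · rw [div_lt_div_iff₀ hs hsp] at hC ⊢
    nlinarith [mul_pos hq0m hs, mul_pos hq1m hs, mul_lt_mul_of_pos_right hC hq0m,
      mul_le_mul_of_nonneg_right h0 hs.le]
  · rw [div_lt_div_iff₀ hsp hs] at hC
    rw [div_lt_div_iff₀ hs hsp]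
    nlinarith [mul_pos hq0m hs, mul_pos hq1m hs, mul_lt_mul_of_pos_right hC hq1m,
      mul_le_mul_of_nonneg_right h1 hs.le]
end

section
/- Let S0, S1 be finite nonempty sets of pairs (L, q) of reals with q > 0. Suppose (L0*, q0*) ∈ S0 and (L1*, q1*) ∈ S1 minimize L_AIFV(s0, s1) = (q1·L0 + q0·L1)/(q0+q1) over S0 × S1, with optimal value L* and C* = (L1* − L0*)/(q0* + q1*). Suppose (L0, q0) ∈ S0 minimizes L0' + Ĉ·q0' over S0 and (L1, q1) ∈ S1 minimizes L1' − Ĉ·q1' over S1 for some fixed Ĉ, and suppose Ĉ = (L1 − L0)/(q0 + q1) (fixed point of the cost update). Then (q1·L0 + q0·L1)/(q0 + q1) = L*. -/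
/-!
At the fixed point, `Ĉ (q0 + q1) = L1 - L0`, so the AIFV cost `L` of `(L0, q0), (L1, q1)` equals
both `L0 + Ĉ q0` and `L1 - Ĉ q1`. Minimality of these two quantities gives `L ≤ L0* + Ĉ q0*` and
`L ≤ L1* - Ĉ q1*`; averaging with weights `q1*` and `q0*` cancels `Ĉ` and leaves `L ≤ L*`.
-/

section WeightedAverage

variable {L0 q0 L1 q1 C : ℝ}

theorem weightedAvg_eq_add_mul (hq : q0 + q1 ≠ 0) (hC : C = (L1 - L0) / (q0 + q1)) :
    (q1 * L0 + q0 * L1) / (q0 + q1) = L0 + C * q0 := by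
  rw [hC, div_mul_eq_mul_div, add_div' _ _ _ hq, div_left_inj' hq]
  ring

theorem weightedAvg_eq_sub_mul (hq : q0 + q1 ≠ 0) (hC : C = (L1 - L0) / (q0 + q1)) :
    (q1 * L0 + q0 * L1) / (q0 + q1) = L1 - C * q1 := by
  rw [hC, div_mul_eq_mul_div, sub_div' hq, div_left_inj' hq]
  ring

theorem le_weightedAvg_of_le_add_mul_of_le_sub_mul {L : ℝ} (hq0 : 0 ≤ q0) (hq1 : 0 ≤ q1)
    (hq : 0 < q0 + q1) (h0 : L ≤ L0 + C * q0) (h1 : L ≤ L1 - C * q1) :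
    L ≤ (q1 * L0 + q0 * L1) / (q0 + q1) := by
  rw [le_div_iff₀ hq]
  calc L * (q0 + q1) = q1 * L + q0 * L := by ring
    _ ≤ q1 * (L0 + C * q0) + q0 * (L1 - C * q1) := by gcongr
    _ = q1 * L0 + q0 * L1 := by ring

end WeightedAverage

theorem stmt_12_general (S0 S1 : Finset (ℝ × ℝ))
    (hq0S : ∀ p ∈ S0, 0 < p.2) (hq1S : ∀ p ∈ S1, 0 < p.2)
    (L0s q0s L1s q1s L0 q0 L1 q1 Lstar Chat : ℝ)
    (hmem0s : (L0s, q0s) ∈ S0) (hmem1s : (L1s, q1s) ∈ S1)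
    (hLstar : Lstar = (q1s * L0s + q0s * L1s) / (q0s + q1s))
    (hopt : ∀ p0 ∈ S0, ∀ p1 ∈ S1,
      Lstar ≤ (p1.2 * p0.1 + p0.2 * p1.1) / (p0.2 + p1.2))
    (hmem0 : (L0, q0) ∈ S0) (hmem1 : (L1, q1) ∈ S1)
    (hmin0 : ∀ p ∈ S0, L0 + Chat * q0 ≤ p.1 + Chat * p.2)
    (hmin1 : ∀ p ∈ S1, L1 - Chat * q1 ≤ p.1 - Chat * p.2)
    (hfix : Chat = (L1 - L0) / (q0 + q1)) :
    (q1 * L0 + q0 * L1) / (q0 + q1) = Lstar := by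
  have hq : q0 + q1 ≠ 0 := (add_pos (hq0S _ hmem0) (hq1S _ hmem1)).ne'
  have hq0s : 0 < q0s := hq0S _ hmem0s
  have hq1s : 0 < q1s := hq1S _ hmem1s
  refine le_antisymm ?_ (hopt _ hmem0 _ hmem1)
  rw [hLstar]
  apply le_weightedAvg_of_le_add_mul_of_le_sub_mul hq0s.le hq1s.le (add_pos hq0s hq1s) (C := Chat)
  · rw [weightedAvg_eq_add_mul hq hfix]
    exact hmin0 _ hmem0s
  · rw [weightedAvg_eq_sub_mul hq hfix]
    exact hmin1 _ hmem1s

/-- A fixed point of the iterative cost-update algorithm yields globally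
optimal AIFV code trees (abstract form of Theorem 2). -/
theorem stmt_12 (S0 S1 : Finset (ℝ × ℝ)) (hS0 : S0.Nonempty) (hS1 : S1.Nonempty)
    (hq0S : ∀ p ∈ S0, 0 < p.2) (hq1S : ∀ p ∈ S1, 0 < p.2)
    (L0s q0s L1s q1s L0 q0 L1 q1 Lstar Chat : ℝ)
    (hmem0s : (L0s, q0s) ∈ S0) (hmem1s : (L1s, q1s) ∈ S1)
    (hLstar : Lstar = (q1s * L0s + q0s * L1s) / (q0s + q1s))
    (hopt : ∀ p0 ∈ S0, ∀ p1 ∈ S1,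
      Lstar ≤ (p1.2 * p0.1 + p0.2 * p1.1) / (p0.2 + p1.2))
    (hmem0 : (L0, q0) ∈ S0) (hmem1 : (L1, q1) ∈ S1)
    (hmin0 : ∀ p ∈ S0, L0 + Chat * q0 ≤ p.1 + Chat * p.2)
    (hmin1 : ∀ p ∈ S1, L1 - Chat * q1 ≤ p.1 - Chat * p.2)
    (hfix : Chat = (L1 - L0) / (q0 + q1)) :
    (q1 * L0 + q0 * L1) / (q0 + q1) = Lstar :=
  stmt_12_general S0 S1 hq0S hq1S L0s q0s L1s q1s L0 q0 L1 q1 Lstar Chat hmem0s hmem1s hLstar hopt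
    hmem0 hmem1 hmin0 hmin1 hfix
end

section
/- Let X be a finite set with distribution P and let u, v : X × {1,…,D} → {0,1} satisfy: ∑_d (u_{t,d} + v_{t,d}) = 1 for each t, and ∑_{t,d} 2^{-d}(u_{t,d} + (3/4)v_{t,d}) = 1. Then the objective ∑_{t,d} p_t(u_{t,d}·d + v_{t,d}·(d + C)) with C ≥ 0 is at least H_2(P) − P_v·(2 − log₂3) + C·P_v, where P_v = ∑_{t,d} p_t·v_{t,d}. -/
/-!
Read `u` and `v` as a code whose codewords are indexed by `{1,…,D} ⊕ {1,…,D}`: a symbol sent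
with `u` at depth `d` has Kraft weight `2⁻ᵈ`, one sent with `v` (a master node) has `(3/4)·2⁻ᵈ`,
and the Kraft-type hypothesis says the weights in use sum to `1`. Gibbs' inequality, in the
termwise form `p (log z - log p) ≤ z - p`, bounds the average of `-log₂ z` below by `H₂(P)`, and
`-log₂ ((3/4)·2⁻ᵈ) = d + (2 - log₂ 3)` turns that average into `L₀ + P_v·(2 - log₂ 3)`.
-/

open Finset Real

theorem Real.mul_sub_log_le_sub {p z : ℝ} (hp : 0 ≤ p) (hz : 0 < z) :
    p * (log z - log p) ≤ z - p := by
  rcases hp.eq_or_lt with rfl | hp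
  · simpa using hz.le
  calc p * (log z - log p) = p * log (z / p) := by rw [log_div hz.ne' hp.ne']
    _ ≤ p * (z / p - 1) := by gcongr; exact log_le_sub_one_of_pos (by positivity)
    _ = z - p := by field_simp

theorem Real.mul_sub_logb_le_sub_div {b p z : ℝ} (hb : 1 < b) (hp : 0 ≤ p) (hz : 0 < z) :
    p * (logb b z - logb b p) ≤ (z - p) / log b := by
  rw [logb, logb, ← sub_div, ← mul_div_assoc]
  exact div_le_div_of_nonneg_right (mul_sub_log_le_sub hp hz) (log_pos hb).le

/-- Gibbs' inequality for a randomised code: symbol `t` gets codeword `i ∈ s` with probability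
`w t i`, and `z t i` stands for `b ^ (-length)` of that codeword. -/
theorem neg_sum_mul_logb_le_of_kraft {X ι : Type*} [Fintype X] {b : ℝ} (hb : 1 < b)
    {p : X → ℝ} (hp : ∀ t, 0 ≤ p t) (hpsum : ∑ t, p t = 1)
    {s : Finset ι} {w z : X → ι → ℝ} (hw : ∀ t i, 0 ≤ w t i)
    (hwsum : ∀ t, ∑ i ∈ s, w t i = 1) (hz : ∀ t i, 0 < z t i)
    (hkraft : ∑ t, ∑ i ∈ s, w t i * z t i ≤ 1) :
    -∑ t, p t * logb b (p t) ≤ ∑ t, ∑ i ∈ s, p t * w t i * -logb b (z t i) := by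
  have hterm : ∀ t i, w t i * (p t * (logb b (z t i) - logb b (p t)))
      ≤ (w t i * z t i - w t i * p t) / log b := fun t i => by
    rw [← mul_sub, mul_div_assoc]
    exact mul_le_mul_of_nonneg_left (mul_sub_logb_le_sub_div hb (hp t) (hz t i)) (hw t i)
  have hsum : ∑ t, ∑ i ∈ s, w t i * (p t * (logb b (z t i) - logb b (p t))) ≤ 0 := calc
    _ ≤ ∑ t, ∑ i ∈ s, (w t i * z t i - w t i * p t) / log b :=
      sum_le_sum fun t _ => sum_le_sum fun i _ => hterm t i
    _ = (∑ t, ∑ i ∈ s, w t i * z t i - ∑ t, p t) / log b := by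
      simp only [← sum_div, sum_sub_distrib, ← sum_mul, hwsum, one_mul]
    _ ≤ 0 := div_nonpos_of_nonpos_of_nonneg (by linarith) (log_pos hb).le
  have hentropy : ∑ t, p t * logb b (p t) = ∑ t, ∑ i ∈ s, w t i * (p t * logb b (p t)) := by
    simp only [← sum_mul, hwsum, one_mul]
  rw [hentropy, ← sub_nonpos]
  convert hsum using 1
  simp only [← sum_neg_distrib, ← sum_sub_distrib]
  exact sum_congr rfl fun t _ => sum_congr rfl fun i _ => by ring

theorem Real.neg_logb_two_inv_two_pow (d : ℕ) : -logb 2 ((2 : ℝ) ^ d)⁻¹ = d := by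
  rw [logb_inv, logb_pow, logb_self_eq_one one_lt_two, neg_neg, mul_one]

theorem Real.neg_logb_two_three_quarters_mul_inv_two_pow (d : ℕ) :
    -logb 2 (3 / 4 * ((2 : ℝ) ^ d)⁻¹) = d + (2 - logb 2 3) := by
  have hfour : logb 2 (4 : ℝ) = 2 := by
    rw [show (4 : ℝ) = 2 ^ 2 by norm_num, logb_pow, logb_self_eq_one one_lt_two]; norm_num
  rw [logb_mul (by norm_num) (by positivity), logb_div (by norm_num) (by norm_num), hfour,
    ← neg_logb_two_inv_two_pow d]
  ring

open Finset in
theorem stmt_19_general {X : Type*} [Fintype X] (D : ℕ) (C : ℝ)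
    (p : X → ℝ) (hp : ∀ t, 0 ≤ p t) (hpsum : ∑ t, p t = 1)
    (u v : X → ℕ → ℝ)
    (hu : ∀ t d, u t d = 0 ∨ u t d = 1) (hv : ∀ t d, v t d = 0 ∨ v t d = 1)
    (hassign : ∀ t, ∑ d ∈ Finset.Icc 1 D, (u t d + v t d) = 1)
    (hKraft : ∑ t, ∑ d ∈ Finset.Icc 1 D,
        ((2 : ℝ) ^ d)⁻¹ * (u t d + (3/4) * v t d) = 1) :
    ∑ t, ∑ d ∈ Finset.Icc 1 D,
        p t * (u t d * d + v t d * ((d : ℝ) + C)) ≥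
      (-∑ t, p t * Real.logb 2 (p t))
        - (∑ t, ∑ d ∈ Finset.Icc 1 D, p t * v t d) * (2 - Real.logb 2 3)
        + C * (∑ t, ∑ d ∈ Finset.Icc 1 D, p t * v t d) := by
  have hnonneg : ∀ {a : ℝ}, a = 0 ∨ a = 1 → 0 ≤ a := by rintro a (rfl | rfl) <;> norm_num
  have hgibbs := neg_sum_mul_logb_le_of_kraft one_lt_two hp hpsum
    (s := (Icc 1 D).disjSum (Icc 1 D))
    (w := fun t => Sum.elim (u t) (v t))
    (z := fun _ => Sum.elim (fun d => ((2 : ℝ) ^ d)⁻¹) (fun d => 3 / 4 * ((2 : ℝ) ^ d)⁻¹))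
    (fun t i => i.rec (fun d => hnonneg (hu t d)) (fun d => hnonneg (hv t d)))
    (fun t => by simpa [sum_add_distrib] using hassign t)
    (fun t i => by cases i <;> simp only [Sum.elim_inl, Sum.elim_inr] <;> positivity)
    (by
      refine (sum_congr rfl fun t _ => ?_).trans_le hKraft.le
      simp only [sum_disjSum, Sum.elim_inl, Sum.elim_inr, ← sum_add_distrib]
      exact sum_congr rfl fun d _ => by ring)
  simp only [sum_disjSum, Sum.elim_inl, Sum.elim_inr, neg_logb_two_inv_two_pow,
    neg_logb_two_three_quarters_mul_inv_two_pow] at hgibbs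
  have hobjective : ∑ t, ∑ d ∈ Icc 1 D, p t * (u t d * d + v t d * ((d : ℝ) + C)) = ∑ t,
      (∑ d ∈ Icc 1 D, p t * u t d * d + ∑ d ∈ Icc 1 D, p t * v t d * (d + (2 - logb 2 3)))
        + (C - (2 - logb 2 3)) * ∑ t, ∑ d ∈ Icc 1 D, p t * v t d := by
    simp only [mul_sum, ← sum_add_distrib]
    exact sum_congr rfl fun t _ => sum_congr rfl fun d _ => by ring
  rw [hobjective]
  linarith

open Finset in
/-- The cost-penalized IP objective for the binary AIFV tree T0 is bounded
below by H₂(P) − P_v·(2 − log₂ 3) + C·P_v. -/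
theorem stmt_19 {X : Type*} [Fintype X] (D : ℕ) (C : ℝ) (hC : 0 ≤ C)
    (p : X → ℝ) (hp : ∀ t, 0 ≤ p t) (hpsum : ∑ t, p t = 1)
    (u v : X → ℕ → ℝ)
    (hu : ∀ t d, u t d = 0 ∨ u t d = 1) (hv : ∀ t d, v t d = 0 ∨ v t d = 1)
    (hassign : ∀ t, ∑ d ∈ Finset.Icc 1 D, (u t d + v t d) = 1)
    (hKraft : ∑ t, ∑ d ∈ Finset.Icc 1 D,
        ((2 : ℝ) ^ d)⁻¹ * (u t d + (3/4) * v t d) = 1) :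
    ∑ t, ∑ d ∈ Finset.Icc 1 D,
        p t * (u t d * d + v t d * ((d : ℝ) + C)) ≥
      (-∑ t, p t * Real.logb 2 (p t))
        - (∑ t, ∑ d ∈ Finset.Icc 1 D, p t * v t d) * (2 - Real.logb 2 3)
        + C * (∑ t, ∑ d ∈ Finset.Icc 1 D, p t * v t d) :=
  stmt_19_general D C p hp hpsum u v hu hv hassign hKraft
end
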